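/- For every nonempty finite simple graph G, the ultimate categorical independence ratio A(G) = lim_{k→∞} i(G^{×k}) is a rational number. -/

import Mathlib

open scoped Classical
open Filter

/-- Categorical (tensor) product of two simple graphs. -/
def tensorProd {α β : Type*} (G : SimpleGraph α) (H : SimpleGraph β) :
    SimpleGraph (α × β) where
  Adj p q := G.Adj p.1 q.1 ∧ H.Adj p.2 q.2
  symm := ⟨fun p q h => ⟨h.1.symm, h.2.symm⟩⟩
  loopless := ⟨fun p h => G.irrefl h.1⟩

/-- A finset is independent. -/
def IsIndep {α : Type*} (G : SimpleGraph α) (U : Finset α) : Prop :=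
  ∀ u ∈ U, ∀ v ∈ U, ¬ G.Adj u v

/-- Neighborhood of a finset. -/
noncomputable def nbhd {α : Type*} [Fintype α] (G : SimpleGraph α) (U : Finset α) : Finset α :=
  Finset.univ.filter (fun v => ∃ u ∈ U, G.Adj u v)

/-- Independence number. -/
noncomputable def alphaNum {α : Type*} [Fintype α] (G : SimpleGraph α) : ℕ :=
  sSup {n : ℕ | ∃ U : Finset α, IsIndep G U ∧ U.card = n}

/-- Independence ratio. -/
noncomputable def iRatio {α : Type*} [Fintype α] (G : SimpleGraph α) : ℝ :=
  (alphaNum G : ℝ) / (Fintype.card α : ℝ)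

/-- a(G): the maximum of |U|/(|U|+|N(U)|) over nonempty independent sets. -/
noncomputable def aRatio {α : Type*} [Fintype α] (G : SimpleGraph α) : ℝ :=
  sSup {r : ℝ | ∃ U : Finset α, U.Nonempty ∧ IsIndep G U ∧
    r = (U.card : ℝ) / ((U.card : ℝ) + ((nbhd G U).card : ℝ))}

/-- b(G): the minimum of |N(U)|/|U| over nonempty independent sets. -/
noncomputable def bRatio {α : Type*} [Fintype α] (G : SimpleGraph α) : ℝ :=
  sInf {r : ℝ | ∃ U : Finset α, U.Nonempty ∧ IsIndep G U ∧
    r = ((nbhd G U).card : ℝ) / (U.card : ℝ)}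

/-- a*(G). -/
noncomputable def aStar {α : Type*} [Fintype α] (G : SimpleGraph α) : ℝ :=
  if aRatio G ≤ 1/2 then aRatio G else 1

/-- k-th categorical power of G. -/
def tensorPow {α : Type*} (G : SimpleGraph α) (k : ℕ) : SimpleGraph (Fin k → α) where
  Adj x y := x ≠ y ∧ ∀ i, G.Adj (x i) (y i)
  symm := ⟨fun x y h => ⟨h.1.symm, fun i => (h.2 i).symm⟩⟩
  loopless := ⟨fun x h => h.1 rfl⟩

/-- Disjoint union of two simple graphs. -/
def disjUnion {α β : Type*} (G : SimpleGraph α) (H : SimpleGraph β) :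
    SimpleGraph (α ⊕ β) where
  Adj p q := match p, q with
    | Sum.inl a, Sum.inl b => G.Adj a b
    | Sum.inr a, Sum.inr b => H.Adj a b
    | _, _ => False
  symm := ⟨by rintro (a|a) (b|b) h <;> simp_all <;> exact h.symm⟩
  loopless := ⟨by rintro (a|a) h <;> simp_all⟩

/-!
The limit is `a*(G)`. Let `U` be an independent set attaining `a = a(G) = |U| / (|U| + |N(U)|)`.

If `a ≤ 1/2`, every independent set of `G` satisfies `|N(W)| ≥ c |W|` with `c = (1 - a) / a ≥ 1`;
this expansion passes to tensor products, so `i(G^{×k}) ≤ 1 / (1 + c) = a`. Conversely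
`U × V(H) ∪ (V(G) \ (U ∪ N(U))) × T` is independent in `G × H` whenever `T` is independent in `H`,
which forces `i(G^{×k}) ≥ a (1 - r^k)` for some `r < 1`.

If `a > 1/2`, then `|N(U)| < |U|`, and the tuples with more coordinates in `U` than in `N(U)`
form an independent set of `G^{×k}`; a Chernoff bound shows that they fill all but an
exponentially small fraction of the vertices, so the limit is `1`.
-/

open Finset

lemma isIndep_singleton {α : Type*} {G : SimpleGraph α} (v : α) : IsIndep G {v} := by
  simp [IsIndep]

section Basic

variable {α : Type*} [Fintype α] {G : SimpleGraph α}

lemma mem_nbhd {U : Finset α} {v : α} : v ∈ nbhd G U ↔ ∃ u ∈ U, G.Adj u v := by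
  simp [nbhd]

lemma nbhd_mono {U V : Finset α} (h : U ⊆ V) : nbhd G U ⊆ nbhd G V := fun v hv => by
  obtain ⟨u, hu, huv⟩ := mem_nbhd.mp hv
  exact mem_nbhd.mpr ⟨u, h hu, huv⟩

lemma IsIndep.disjoint_nbhd {U : Finset α} (hU : IsIndep G U) : Disjoint U (nbhd G U) :=
  disjoint_left.mpr fun v hv hvN => by
    obtain ⟨u, hu, huv⟩ := mem_nbhd.mp hvN
    exact hU u hu v hv huv

lemma IsIndep.card_add_card_nbhd_le {U : Finset α} (hU : IsIndep G U) :
    #U + #(nbhd G U) ≤ Fintype.card α := by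
  rw [← card_union_of_disjoint hU.disjoint_nbhd]
  exact card_le_univ _

lemma IsIndep.card_compl_union_nbhd {U : Finset α} (hU : IsIndep G U) :
    (#(U ∪ nbhd G U)ᶜ : ℝ) = Fintype.card α - (#U + #(nbhd G U)) := by
  rw [← Nat.cast_add, ← card_union_of_disjoint hU.disjoint_nbhd, eq_sub_iff_add_eq]
  exact_mod_cast card_compl_add_card _

lemma isIndep_sdiff_nbhd (A : Finset α) : IsIndep G (A \ nbhd G A) := by
  intro u hu v hv huv
  exact (mem_sdiff.mp hv).2 (mem_nbhd.mpr ⟨u, (mem_sdiff.mp hu).1, huv⟩)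

lemma alphaNum_bddAbove : BddAbove {n : ℕ | ∃ U : Finset α, IsIndep G U ∧ #U = n} := by
  refine ⟨Fintype.card α, ?_⟩
  rintro n ⟨U, -, rfl⟩
  exact card_le_univ U

lemma IsIndep.card_le_alphaNum {U : Finset α} (hU : IsIndep G U) : #U ≤ alphaNum G :=
  le_csSup alphaNum_bddAbove ⟨U, hU, rfl⟩

lemma exists_isIndep_card_eq_alphaNum (G : SimpleGraph α) :
    ∃ U : Finset α, IsIndep G U ∧ #U = alphaNum G :=
  Nat.sSup_mem (s := {n : ℕ | ∃ U : Finset α, IsIndep G U ∧ #U = n}) ⟨0, ∅, by simp [IsIndep]⟩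
    alphaNum_bddAbove

lemma iRatio_nonneg (G : SimpleGraph α) : 0 ≤ iRatio G := by
  unfold iRatio
  positivity

lemma iRatio_le_one [Nonempty α] (G : SimpleGraph α) : iRatio G ≤ 1 := by
  obtain ⟨U, -, hU⟩ := exists_isIndep_card_eq_alphaNum G
  rw [iRatio, div_le_one (by exact_mod_cast Fintype.card_pos), ← hU]
  exact_mod_cast card_le_univ U

lemma aRatio_set_finite (G : SimpleGraph α) :
    {r : ℝ | ∃ U : Finset α, U.Nonempty ∧ IsIndep G U ∧
      r = (#U : ℝ) / ((#U : ℝ) + (#(nbhd G U) : ℝ))}.Finite :=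
  (Set.finite_range fun U : Finset α => (#U : ℝ) / ((#U : ℝ) + (#(nbhd G U) : ℝ))).subset
    fun _ ⟨U, _, _, hr⟩ => ⟨U, hr.symm⟩

lemma le_aRatio {U : Finset α} (hne : U.Nonempty) (hU : IsIndep G U) :
    (#U : ℝ) / ((#U : ℝ) + (#(nbhd G U) : ℝ)) ≤ aRatio G :=
  le_csSup (aRatio_set_finite G).bddAbove ⟨U, hne, hU, rfl⟩

lemma exists_eq_aRatio [Nonempty α] (G : SimpleGraph α) :
    ∃ U : Finset α, U.Nonempty ∧ IsIndep G U ∧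
      aRatio G = (#U : ℝ) / ((#U : ℝ) + (#(nbhd G U) : ℝ)) := by
  refine Set.Nonempty.csSup_mem ?_ (aRatio_set_finite G)
  exact ⟨_, {Classical.arbitrary α}, singleton_nonempty _, isIndep_singleton _, rfl⟩

lemma aRatio_pos [Nonempty α] (G : SimpleGraph α) : 0 < aRatio G := by
  obtain ⟨U, hne, -, hU⟩ := exists_eq_aRatio G
  have hU_pos : (0 : ℝ) < #U := by exact_mod_cast hne.card_pos
  rw [hU]
  positivity

end Basic

section Iso

variable {α β : Type*} {G : SimpleGraph α} {H : SimpleGraph β}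

lemma IsIndep.map (e : G ≃g H) {U : Finset α} (hU : IsIndep G U) :
    IsIndep H (U.map e.toEquiv.toEmbedding) := by
  simp only [IsIndep, Finset.mem_map, forall_exists_index, and_imp]
  rintro _ u hu rfl _ v hv rfl
  simpa [e.map_adj_iff] using hU u hu v hv

lemma nbhd_map [Fintype α] [Fintype β] (e : G ≃g H) (U : Finset α) :
    nbhd H (U.map e.toEquiv.toEmbedding) = (nbhd G U).map e.toEquiv.toEmbedding := by
  ext y
  simp only [mem_nbhd, Finset.mem_map]
  constructor
  · rintro ⟨_, ⟨u, hu, rfl⟩, huy⟩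
    obtain ⟨x, rfl⟩ := e.surjective y
    exact ⟨x, ⟨u, hu, e.map_adj_iff.mp huy⟩, rfl⟩
  · rintro ⟨x, ⟨u, hu, hux⟩, rfl⟩
    exact ⟨e u, ⟨u, hu, rfl⟩, e.map_adj_iff.mpr hux⟩

lemma alphaNum_le_of_iso [Fintype α] [Fintype β] (e : G ≃g H) : alphaNum G ≤ alphaNum H := by
  obtain ⟨U, hU, hcard⟩ := exists_isIndep_card_eq_alphaNum G
  simpa [hcard] using (hU.map e).card_le_alphaNum

lemma iRatio_congr [Fintype α] [Fintype β] (e : G ≃g H) : iRatio G = iRatio H := by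
  rw [iRatio, iRatio, Fintype.card_congr e.toEquiv,
    (alphaNum_le_of_iso e).antisymm (alphaNum_le_of_iso e.symm)]

end Iso

section Power

variable {α : Type*} (G : SimpleGraph α)

def tensorPowOneIso : tensorPow G 1 ≃g G where
  toEquiv := Equiv.funUnique (Fin 1) α
  map_rel_iff' {x y} := by
    refine ⟨fun h => ⟨fun hxy => G.irrefl (hxy ▸ h), fun i => ?_⟩, fun h => h.2 0⟩
    simpa [Subsingleton.elim i default] using h

def tensorPowSuccIso (k : ℕ) : tensorProd G (tensorPow G (k + 1)) ≃g tensorPow G (k + 2) where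
  toEquiv := Fin.consEquiv fun _ => α
  map_rel_iff' {p q} := by
    simp only [tensorPow, tensorProd, Fin.consEquiv_apply]
    refine ⟨fun h => ⟨by simpa using h.2 0, fun hpq => by simpa [hpq] using h.2 1,
        fun i => by simpa using h.2 i.succ⟩,
      fun h => ⟨fun hpq => G.irrefl ((Fin.consEquiv _).injective hpq ▸ h.1),
        Fin.cases (by simpa using h.1) (by simpa using h.2.2)⟩⟩

end Power

section Expansion

def IsExpanding {α : Type*} [Fintype α] (G : SimpleGraph α) (c : ℝ) : Prop :=
  ∀ U : Finset α, IsIndep G U → c * #U ≤ #(nbhd G U)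

variable {α : Type*} [Fintype α] {G : SimpleGraph α} {c : ℝ}

lemma IsExpanding.of_iso {β : Type*} [Fintype β] {H : SimpleGraph β} (h : IsExpanding G c)
    (e : G ≃g H) : IsExpanding H c := fun W hW => by
  simpa [nbhd_map] using h _ (hW.map e.symm)

/-- `A \ N(A)` is independent, and its neighbourhood lies in `N(A)` away from `A`. -/
lemma IsExpanding.mul_card_sdiff_add_card_inter_le (h : IsExpanding G c) (A : Finset α) :
    c * #(A \ nbhd G A) + #(A ∩ nbhd G A) ≤ #(nbhd G A) := by
  have hdisj : Disjoint (nbhd G (A \ nbhd G A)) (A ∩ nbhd G A) := by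
    refine disjoint_left.mpr fun v hv hvA => ?_
    obtain ⟨u, hu, huv⟩ := mem_nbhd.mp hv
    exact (mem_sdiff.mp hu).2 (mem_nbhd.mpr ⟨v, (mem_inter.mp hvA).1, huv.symm⟩)
  have hsub : nbhd G (A \ nbhd G A) ∪ (A ∩ nbhd G A) ⊆ nbhd G A :=
    union_subset (nbhd_mono sdiff_subset) inter_subset_right
  have hcard : (#(nbhd G (A \ nbhd G A)) : ℝ) + #(A ∩ nbhd G A) ≤ #(nbhd G A) := by
    exact_mod_cast card_union_of_disjoint hdisj ▸ card_le_card hsub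
  linarith [h _ (isIndep_sdiff_nbhd A)]

lemma IsExpanding.mul_card_le (h : IsExpanding G c) (A : Finset α) :
    c * #A ≤ #(nbhd G A) + (c - 1) * #(A ∩ nbhd G A) := by
  have hsplit : (#(A \ nbhd G A) : ℝ) + #(A ∩ nbhd G A) = #A := by
    exact_mod_cast card_sdiff_add_card_inter A (nbhd G A)
  rw [← hsplit]
  linarith [h.mul_card_sdiff_add_card_inter_le A]

lemma IsExpanding.card_add_mul_card_le (h : IsExpanding G c) (hc : 1 ≤ c) (A : Finset α)
    {C : Finset α} (hC : C ⊆ A \ nbhd G A) :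
    #A + (c - 1) * #C ≤ #(nbhd G A) := by
  have hsplit : (#(A \ nbhd G A) : ℝ) + #(A ∩ nbhd G A) = #A := by
    exact_mod_cast card_sdiff_add_card_inter A (nbhd G A)
  have hCle : (c - 1) * #C ≤ (c - 1) * #(A \ nbhd G A) :=
    mul_le_mul_of_nonneg_left (by exact_mod_cast card_le_card hC) (sub_nonneg.mpr hc)
  linarith [h.mul_card_sdiff_add_card_inter_le A]

end Expansion

section Product

variable {α β : Type*} [Fintype α] [Fintype β]

lemma card_eq_sum_card_fst_section (s : Finset (α × β)) : #s = ∑ a, #{b | (a, b) ∈ s} :=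
  calc #s = ∑ p : α × β, if p ∈ s then 1 else 0 := by simp
    _ = ∑ a, ∑ b, if (a, b) ∈ s then 1 else 0 := Fintype.sum_prod_type _
    _ = ∑ a, #{b | (a, b) ∈ s} := by simp

lemma card_eq_sum_card_snd_section (s : Finset (α × β)) : #s = ∑ b, #{a | (a, b) ∈ s} :=
  calc #s = ∑ p : α × β, if p ∈ s then 1 else 0 := by simp
    _ = ∑ b, ∑ a, if (a, b) ∈ s then 1 else 0 := Fintype.sum_prod_type_right _
    _ = ∑ b, #{a | (a, b) ∈ s} := by simp

/-- Double counting through the pairs `P = {(a, b) | b ∈ N(W_a)}`, where `W_a` is the section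
of `W` at `a`: expansion in the second factor, summed over `a`, gives `c|W| ≤ |P| + (c-1)|W ∩ P|`;
expansion in the first factor, summed over `b`, gives `|P| + (c-1)|W ∩ P| ≤ |N(W)|`. -/
lemma IsExpanding.tensorProd {G : SimpleGraph α} {H : SimpleGraph β} {c : ℝ} (hc : 1 ≤ c)
    (hG : IsExpanding G c) (hH : IsExpanding H c) : IsExpanding (_root_.tensorProd G H) c := by
  intro W hW
  set P : Finset (α × β) := {p | ∃ b, (p.1, b) ∈ W ∧ H.Adj b p.2}
  have hP_fst (a : α) : ({b | (a, b) ∈ P} : Finset β) = nbhd H {b | (a, b) ∈ W} := by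
    ext b
    simp [P, mem_nbhd]
  have hWP_fst (a : α) :
      ({b | (a, b) ∈ W ∩ P} : Finset β) =
        ({b | (a, b) ∈ W} : Finset β) ∩ nbhd H {b | (a, b) ∈ W} := by
    rw [← hP_fst]
    ext b
    simp
  have hN_snd (b : β) :
      ({a | (a, b) ∈ nbhd (_root_.tensorProd G H) W} : Finset α) = nbhd G {a | (a, b) ∈ P} := by
    ext a
    simp only [mem_filter, mem_univ, true_and, mem_nbhd, P, _root_.tensorProd]
    constructor
    · rintro ⟨⟨a', b'⟩, hW', ha, hb⟩
      exact ⟨a', ⟨b', hW', hb⟩, ha⟩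
    · rintro ⟨a', ⟨b', hW', hb⟩, ha⟩
      exact ⟨(a', b'), hW', ha, hb⟩
  have hWP_snd (b : β) :
      ({a | (a, b) ∈ W ∩ P} : Finset α) ⊆
        ({a | (a, b) ∈ P} : Finset α) \ nbhd G {a | (a, b) ∈ P} := by
    intro a ha
    simp only [mem_filter, mem_univ, true_and, mem_inter] at ha
    refine mem_sdiff.mpr ⟨by simpa using ha.2, fun haN => ?_⟩
    obtain ⟨a', ha', hadj⟩ := mem_nbhd.mp haN
    obtain ⟨b', hW', hb⟩ := by simpa [P] using ha'
    exact hW _ hW' _ ha.1 ⟨hadj, hb⟩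
  have hle_P : c * #W ≤ #P + (c - 1) * #(W ∩ P) := by
    rw [card_eq_sum_card_fst_section W, card_eq_sum_card_fst_section P,
      card_eq_sum_card_fst_section (W ∩ P)]
    push_cast
    rw [mul_sum, mul_sum, ← sum_add_distrib]
    refine sum_le_sum fun a _ => ?_
    rw [hP_fst, hWP_fst]
    exact hH.mul_card_le _
  have hP_le : #P + (c - 1) * #(W ∩ P) ≤ #(nbhd (_root_.tensorProd G H) W) := by
    rw [card_eq_sum_card_snd_section P, card_eq_sum_card_snd_section (W ∩ P),
      card_eq_sum_card_snd_section (nbhd _ W)]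
    push_cast
    rw [mul_sum, ← sum_add_distrib]
    refine sum_le_sum fun b _ => ?_
    rw [hN_snd]
    exact hG.card_add_mul_card_le hc _ (hWP_snd b)
  exact hle_P.trans hP_le

lemma IsExpanding.tensorPow {G : SimpleGraph α} {c : ℝ} (hc : 1 ≤ c) (hG : IsExpanding G c)
    (k : ℕ) : IsExpanding (_root_.tensorPow G (k + 1)) c := by
  induction k with
  | zero => exact hG.of_iso (tensorPowOneIso G).symm
  | succ k ih => exact (hG.tensorProd hc ih).of_iso (tensorPowSuccIso G k)

end Product

section UpperBound

variable {α : Type*} [Fintype α] [Nonempty α] {G : SimpleGraph α}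

lemma IsExpanding.one_add_mul_iRatio_le {c : ℝ} (h : IsExpanding G c) :
    (1 + c) * iRatio G ≤ 1 := by
  obtain ⟨W, hW, hcard⟩ := exists_isIndep_card_eq_alphaNum G
  have hn : (0 : ℝ) < Fintype.card α := by exact_mod_cast Fintype.card_pos
  have hWN : ((#W + #(nbhd G W) : ℕ) : ℝ) ≤ Fintype.card α := by
    exact_mod_cast hW.card_add_card_nbhd_le
  push_cast at hWN
  rw [iRatio, ← hcard, mul_div_assoc', div_le_one hn]
  linarith [h W hW]

lemma isExpanding_aRatio (G : SimpleGraph α) :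
    IsExpanding G ((1 - aRatio G) / aRatio G) := by
  intro U hU
  rcases U.eq_empty_or_nonempty with rfl | hne
  · simp
  have hpos : (0 : ℝ) < #U := by exact_mod_cast hne.card_pos
  have hle := le_aRatio hne hU
  rw [div_le_iff₀ (by positivity)] at hle
  rw [div_mul_eq_mul_div, div_le_iff₀ (aRatio_pos G)]
  linarith

lemma iRatio_tensorPow_le_aRatio (h : aRatio G ≤ 1 / 2) (k : ℕ) :
    iRatio (tensorPow G (k + 1)) ≤ aRatio G := by
  have ha := aRatio_pos G
  have hc : 1 ≤ (1 - aRatio G) / aRatio G := by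
    rw [le_div_iff₀ ha]
    linarith
  have hbound := ((isExpanding_aRatio G).tensorPow hc k).one_add_mul_iRatio_le
  rwa [one_add_div ha.ne', add_sub_cancel, one_div_mul_eq_div, div_le_one ha] at hbound

end UpperBound

section LowerBound

variable {α β : Type*} [Fintype α] [Fintype β] {G : SimpleGraph α}

/-- The independent set `U × V(H) ∪ (V(G) \ (U ∪ N(U))) × T` for a maximum independent `T`. -/
lemma IsIndep.card_mul_add_le_alphaNum_tensorProd {U : Finset α} (hU : IsIndep G U)
    (H : SimpleGraph β) :
    #U * Fintype.card β + #(U ∪ nbhd G U)ᶜ * alphaNum H ≤ alphaNum (tensorProd G H) := by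
  obtain ⟨T, hT, hTcard⟩ := exists_isIndep_card_eq_alphaNum H
  have hdisj : Disjoint (U ×ˢ (univ : Finset β)) ((U ∪ nbhd G U)ᶜ ×ˢ T) :=
    disjoint_product.mpr <| Or.inl <|
      disjoint_compl_right.mono_right (compl_le_compl subset_union_left)
  have hindep : IsIndep (tensorProd G H) (U ×ˢ univ ∪ (U ∪ nbhd G U)ᶜ ×ˢ T) := by
    rintro ⟨a, b⟩ hab ⟨a', b'⟩ hab' ⟨hGa, hHb⟩
    simp only [mem_union, mem_product, mem_univ, and_true, mem_compl, not_or] at hab hab'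
    rcases hab with ha | ⟨⟨-, ha⟩, hb⟩ <;> rcases hab' with ha' | ⟨⟨-, ha'⟩, hb'⟩
    · exact hU a ha a' ha' hGa
    · exact ha' (mem_nbhd.mpr ⟨a, ha, hGa⟩)
    · exact ha (mem_nbhd.mpr ⟨a', ha', hGa.symm⟩)
    · exact hT b hb b' hb' hHb
  have hcard := hindep.card_le_alphaNum
  rwa [card_union_of_disjoint hdisj, card_product, card_product, card_univ, hTcard] at hcard

variable [Nonempty α] [Nonempty β]

lemma IsIndep.le_iRatio_tensorProd {U : Finset α} (hU : IsIndep G U) (H : SimpleGraph β) :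
    #U / Fintype.card α + #(U ∪ nbhd G U)ᶜ / Fintype.card α * iRatio H ≤
      iRatio (tensorProd G H) := by
  have hn : (0 : ℝ) < Fintype.card α := by exact_mod_cast Fintype.card_pos
  have hm : (0 : ℝ) < Fintype.card β := by exact_mod_cast Fintype.card_pos
  rw [iRatio, iRatio, Fintype.card_prod, Nat.cast_mul, le_div_iff₀ (by positivity)]
  calc _ = ((#U * Fintype.card β + #(U ∪ nbhd G U)ᶜ * alphaNum H : ℕ) : ℝ) := by
        push_cast
        field_simp
    _ ≤ (alphaNum (tensorProd G H) : ℝ) := by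
        exact_mod_cast hU.card_mul_add_le_alphaNum_tensorProd H

/-- With `a = |U| / (|U| + |N(U)|)` and `r = |V \ (U ∪ N(U))| / |V|` one has
`a (1 - r) = |U| / |V|`, so the bound of `le_iRatio_tensorProd` propagates along powers. -/
lemma IsIndep.le_iRatio_tensorPow {U : Finset α} (hU : IsIndep G U) (hne : U.Nonempty)
    (k : ℕ) :
    #U / (#U + #(nbhd G U)) * (1 - (#(U ∪ nbhd G U)ᶜ / Fintype.card α : ℝ) ^ k) ≤
      iRatio (tensorPow G (k + 1)) := by
  induction k with
  | zero => simpa using iRatio_nonneg _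
  | succ k ih =>
    have hn : (0 : ℝ) < Fintype.card α := by exact_mod_cast Fintype.card_pos
    have hu : (0 : ℝ) < #U := by exact_mod_cast hne.card_pos
    set r : ℝ := #(U ∪ nbhd G U)ᶜ / Fintype.card α with hr
    set a : ℝ := #U / (#U + #(nbhd G U)) with ha
    have key : a * (1 - r) = #U / Fintype.card α := by
      rw [ha, hr, hU.card_compl_union_nbhd]
      field_simp
      ring
    rw [← iRatio_congr (tensorPowSuccIso G k)]
    refine le_trans ?_ (hU.le_iRatio_tensorProd _)
    calc a * (1 - r ^ (k + 1)) = #U / Fintype.card α + r * (a * (1 - r ^ k)) := by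
          rw [← key]
          ring
      _ ≤ _ := by gcongr

end LowerBound

section Majority

variable {α : Type*} [Fintype α] {G : SimpleGraph α}

lemma isIndep_tensorPow_filter_sum_neg (f : α → ℝ) (hf : ∀ v w, G.Adj v w → 0 ≤ f v + f w)
    (t : ℕ) : IsIndep (tensorPow G t) {x | ∑ i, f (x i) < 0} := by
  intro x hx y hy hxy
  simp only [mem_filter, mem_univ, true_and] at hx hy
  have : 0 ≤ ∑ i, (f (x i) + f (y i)) := sum_nonneg fun i _ => hf _ _ (hxy.2 i)
  rw [sum_add_distrib] at this
  linarith

/-- Chernoff's bound: `1 ≤ exp (s ∑ f (x i)) = ∏ exp (s f (x i))` on the counted set, and the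
products sum to `(∑ exp (s f v)) ^ t` over all of `Fin t → α`. -/
lemma card_filter_sum_nonneg_le (f : α → ℝ) {s : ℝ} (hs : 0 ≤ s) (t : ℕ) :
    (#{x : Fin t → α | 0 ≤ ∑ i, f (x i)} : ℝ) ≤ (∑ v, Real.exp (s * f v)) ^ t := by
  calc (#{x : Fin t → α | 0 ≤ ∑ i, f (x i)} : ℝ)
      = ∑ x ∈ {x : Fin t → α | 0 ≤ ∑ i, f (x i)}, 1 := by simp
    _ ≤ ∑ x ∈ {x : Fin t → α | 0 ≤ ∑ i, f (x i)}, ∏ i, Real.exp (s * f (x i)) := by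
        refine sum_le_sum fun x hx => ?_
        rw [← Real.exp_sum, ← mul_sum]
        exact Real.one_le_exp (mul_nonneg hs (mem_filter.mp hx).2)
    _ ≤ ∑ x : Fin t → α, ∏ i, Real.exp (s * f (x i)) :=
        sum_le_sum_of_subset_of_nonneg (subset_univ _) fun _ _ _ => by positivity
    _ = (∑ v, Real.exp (s * f v)) ^ t := by
        rw [← Fin.prod_const]
        exact (Fintype.prod_sum fun _ v => Real.exp (s * f v)).symm

lemma one_sub_pow_le_iRatio_tensorPow [Nonempty α] (f : α → ℝ)
    (hf : ∀ v w, G.Adj v w → 0 ≤ f v + f w) {s : ℝ} (hs : 0 ≤ s) (t : ℕ) :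
    1 - ((∑ v, Real.exp (s * f v)) / Fintype.card α) ^ t ≤ iRatio (tensorPow G t) := by
  have hn : (0 : ℝ) < Fintype.card α := by exact_mod_cast Fintype.card_pos
  have hsplit : (#{x : Fin t → α | ∑ i, f (x i) < 0} : ℝ) +
      #{x : Fin t → α | 0 ≤ ∑ i, f (x i)} = (Fintype.card α : ℝ) ^ t := by
    have h := card_filter_add_card_filter_not (s := univ) fun x : Fin t → α => ∑ i, f (x i) < 0
    simp only [not_lt, card_univ, Fintype.card_fun, Fintype.card_fin] at h
    exact_mod_cast h
  have hgood : (#{x : Fin t → α | ∑ i, f (x i) < 0} : ℝ) ≤ alphaNum (tensorPow G t) := by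
    exact_mod_cast (isIndep_tensorPow_filter_sum_neg f hf t).card_le_alphaNum
  rw [iRatio, Fintype.card_fun, Fintype.card_fin, Nat.cast_pow, le_div_iff₀ (by positivity),
    sub_mul, one_mul, div_pow, div_mul_cancel₀ _ (by positivity)]
  linarith [card_filter_sum_nonneg_le f hs t]

noncomputable def nbhdScore (G : SimpleGraph α) (U : Finset α) (v : α) : ℝ :=
  (if v ∈ nbhd G U then 1 else 0) - (if v ∈ U then 1 else 0)

lemma nbhdScore_add_nonneg (U : Finset α) {v w : α} (hvw : G.Adj v w) :
    0 ≤ nbhdScore G U v + nbhdScore G U w := by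
  have hv : v ∈ U → w ∈ nbhd G U := fun hv => mem_nbhd.mpr ⟨v, hv, hvw⟩
  have hw : w ∈ U → v ∈ nbhd G U := fun hw => mem_nbhd.mpr ⟨w, hw, hvw.symm⟩
  unfold nbhdScore
  split_ifs <;> simp_all

lemma IsIndep.sum_exp_mul_nbhdScore {U : Finset α} (hU : IsIndep G U) {lam : ℝ} (hlam : 0 < lam) :
    ∑ v, Real.exp (Real.log lam * nbhdScore G U v) =
      #U * lam⁻¹ + #(nbhd G U) * lam + (Fintype.card α - (#U + #(nbhd G U))) := by
  have hUN : ∀ v ∈ U, v ∉ nbhd G U := fun v hv => disjoint_left.mp hU.disjoint_nbhd hv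
  have h₁ : ∀ v ∈ U, Real.exp (Real.log lam * nbhdScore G U v) = lam⁻¹ := fun v hv => by
    simp [nbhdScore, hv, hUN v hv, Real.exp_neg, Real.exp_log hlam]
  have h₂ : ∀ v ∈ nbhd G U, Real.exp (Real.log lam * nbhdScore G U v) = lam := fun v hv => by
    have hvU : v ∉ U := fun h => hUN v h hv
    simp [nbhdScore, hv, hvU, Real.exp_log hlam]
  have h₃ : ∀ v ∈ (U ∪ nbhd G U)ᶜ, Real.exp (Real.log lam * nbhdScore G U v) = 1 :=
    fun v hv => by
      simp only [mem_compl, mem_union, not_or] at hv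
      simp [nbhdScore, hv.1, hv.2]
  rw [← sum_add_sum_compl (U ∪ nbhd G U), sum_union hU.disjoint_nbhd, sum_congr rfl h₁,
    sum_congr rfl h₂, sum_congr rfl h₃, ← hU.card_compl_union_nbhd]
  simp

/-- Majority vote: keep the tuples with fewer coordinates in `N(U)` than in `U`. The Chernoff
weights `λ⁻¹` on `U` and `λ` on `N(U)`, with `λ = 2|U| / (|U| + |N(U)|)`, have total weight
`|V| - (|U| + |N(U)|) + (|U| + |N(U)|) / 2 + 2|U||N(U)| / (|U| + |N(U)|) < |V|` by AM-GM. -/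
lemma IsIndep.exists_one_sub_pow_le_iRatio_tensorPow [Nonempty α] {U : Finset α}
    (hU : IsIndep G U) (hlt : #(nbhd G U) < #U) :
    ∃ q : ℝ, 0 ≤ q ∧ q < 1 ∧ ∀ t, 1 - q ^ t ≤ iRatio (tensorPow G t) := by
  have hu : (0 : ℝ) < #U := by exact_mod_cast (Nat.zero_le _).trans_lt hlt
  have hwu : (#(nbhd G U) : ℝ) < #U := by exact_mod_cast hlt
  have hn : (0 : ℝ) < Fintype.card α := by exact_mod_cast Fintype.card_pos
  set lam : ℝ := 2 * #U / (#U + #(nbhd G U)) with hlam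
  have hlam_pos : 0 < lam := by positivity
  have hlam_one : 1 ≤ lam := by
    rw [hlam, le_div_iff₀ (by positivity)]
    linarith
  have hweight : #U * lam⁻¹ + #(nbhd G U) * lam < #U + #(nbhd G U) := by
    rw [hlam, inv_div]
    field_simp
    nlinarith [sq_pos_of_pos (sub_pos.mpr hwu)]
  refine ⟨(∑ v, Real.exp (Real.log lam * nbhdScore G U v)) / Fintype.card α, by positivity, ?_,
    one_sub_pow_le_iRatio_tensorPow _ (fun _ _ => nbhdScore_add_nonneg U)
      (Real.log_nonneg hlam_one)⟩
  rw [div_lt_one hn, hU.sum_exp_mul_nbhdScore hlam_pos]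
  linarith

end Majority

section Limit

open Topology

lemma tendsto_of_mul_one_sub_pow_le_of_le {s : ℕ → ℝ} {b q : ℝ} (hq₀ : 0 ≤ q) (hq₁ : q < 1)
    (hlow : ∀ k, b * (1 - q ^ k) ≤ s k) (hup : ∀ k, s k ≤ b) : Tendsto s atTop (𝓝 b) := by
  have h : Tendsto (fun k => b * (1 - q ^ k)) atTop (𝓝 (b * (1 - 0))) :=
    (tendsto_const_nhds.sub (tendsto_pow_atTop_nhds_zero_of_lt_one hq₀ hq₁)).const_mul b
  rw [sub_zero, mul_one] at h
  exact tendsto_of_tendsto_of_tendsto_of_le_of_le h tendsto_const_nhds hlow hup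

variable {α : Type*} [Fintype α] [Nonempty α] (G : SimpleGraph α)

lemma tendsto_iRatio_tensorPow_of_aRatio_le_half (h : aRatio G ≤ 1 / 2) :
    Tendsto (fun k => iRatio (tensorPow G (k + 1))) atTop (𝓝 (aRatio G)) := by
  obtain ⟨U, hne, hU, ha⟩ := exists_eq_aRatio G
  have hn : (0 : ℝ) < Fintype.card α := by exact_mod_cast Fintype.card_pos
  have hlt : #(U ∪ nbhd G U)ᶜ < Fintype.card α :=
    (card_compl_lt_iff_nonempty _).mpr (hne.mono subset_union_left)
  refine tendsto_of_mul_one_sub_pow_le_of_le (by positivity) ?_ (ha ▸ hU.le_iRatio_tensorPow hne)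
    (iRatio_tensorPow_le_aRatio h)
  rw [div_lt_one hn]
  exact_mod_cast hlt

lemma tendsto_iRatio_tensorPow_of_half_lt_aRatio (h : 1 / 2 < aRatio G) :
    Tendsto (fun k => iRatio (tensorPow G (k + 1))) atTop (𝓝 1) := by
  obtain ⟨U, hne, hU, ha⟩ := exists_eq_aRatio G
  have hpos : (0 : ℝ) < #U + #(nbhd G U) := by
    have : (0 : ℝ) < #U := by exact_mod_cast hne.card_pos
    positivity
  have hlt : #(nbhd G U) < #U := by
    rw [ha, lt_div_iff₀ hpos] at h
    exact_mod_cast (by linarith : (#(nbhd G U) : ℝ) < #U)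
  obtain ⟨q, hq₀, hq₁, hq⟩ := hU.exists_one_sub_pow_le_iRatio_tensorPow hlt
  refine tendsto_of_mul_one_sub_pow_le_of_le hq₀ hq₁ (fun k => ?_) (fun k => iRatio_le_one _)
  calc 1 * (1 - q ^ k) ≤ 1 - q ^ (k + 1) := by
        rw [one_mul, pow_succ]
        nlinarith [pow_nonneg hq₀ k]
    _ ≤ _ := hq (k + 1)

theorem tendsto_iRatio_tensorPow_aStar :
    Tendsto (fun k => iRatio (tensorPow G (k + 1))) atTop (𝓝 (aStar G)) := by
  unfold aStar
  split_ifs with h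
  · exact tendsto_iRatio_tensorPow_of_aRatio_le_half G h
  · exact tendsto_iRatio_tensorPow_of_half_lt_aRatio G (not_le.mp h)

lemma exists_rat_eq_aStar : ∃ q : ℚ, aStar G = q := by
  obtain ⟨U, -, -, ha⟩ := exists_eq_aRatio G
  unfold aStar
  split_ifs
  · exact ⟨#U / (#U + #(nbhd G U)), by rw [ha]; push_cast; rfl⟩
  · exact ⟨1, by simp⟩

end Limit

theorem stmt17 {α : Type*} [Fintype α] [Nonempty α] (G : SimpleGraph α) (L : ℝ)
    (h : Tendsto (fun k : ℕ => iRatio (tensorPow G (k + 1))) atTop (nhds L)) :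
    ∃ q : ℚ, L = (q : ℝ) := by
  rw [tendsto_nhds_unique h (tendsto_iRatio_tensorPow_aStar G)]
  exact exists_rat_eq_aStar G
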